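/- arXiv:math/0602501 — 5 statements merged into one kernel-verified Lean document; each statement's English description precedes it below -/
import Mathlib

section
/- Under hypothesis (H), the series Σ² := E[X₁ ⊗ X₁] + ∑_{k≥1} (E[X₁ ⊗ X_{k+1}] + E[X_{k+1} ⊗ X₁]) converges entrywise absolutely, Σ² = lim_{n→∞} (1/n)·E[S_n ⊗ S_n], and for every integer n ≥ 1, |E[S_n ⊗ S_n] − n·Σ²|_∞ ≤ 4CM·∑_{k≥1} k·φ_{k,0}. -/
/-! The lag covariances `c_k = E[X₁ ⊗ X_{k+1}]` are controlled by (H) applied to `F = f(x_i)`,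
where `f` is a differentiable clamp that is the identity on `[-M, M]`, overshoots by at most `w`
and has slope at most `1`: this gives `|c_k| ≤ C (M + w + 1) φ_{k,0}` for every `w > 0`, hence
`|c_k| ≤ 2CM φ_{k,0}`. By stationarity `E[S_n ⊗ S_n] = n c₀ + ∑_{m<n} ∑_{k<m} a_k` with
`a_k = c_{k+1} + c_{k+1}ᵀ`, so
`E[S_n ⊗ S_n] - nΣ² = -(∑_{k<n} (k + 1) a_k + n ∑_{k≥n} a_k)`,
which is at most `∑_k (k + 1) |a_k|` in absolute value. -/

open MeasureTheory ProbabilityTheory Filter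
open scoped ENNReal NNReal

/-- The partial sums `S_n = X_1 + ⋯ + X_n` (with `S_0 = 0`). -/
noncomputable def Ssum {Ω : Type*} {d : ℕ} (X : ℕ → Ω → Fin d → ℝ) (n : ℕ) (ω : Ω) :
    Fin d → ℝ :=
  ∑ k ∈ Finset.Icc 1 n, X k ω

/-- Stationarity of the sequence `(X_k)`: the law of the shifted process equals
the law of the process. -/
def Stationary {Ω : Type*} [MeasurableSpace Ω] {d : ℕ} (ν : Measure Ω)
    (X : ℕ → Ω → Fin d → ℝ) : Prop :=
  ∀ m : ℕ, Measure.map (fun ω => fun i : ℕ => X (i + m) ω) ν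
         = Measure.map (fun ω => fun i : ℕ => X i ω) ν

/-- The covariance-decay hypothesis (1) of hypothesis (H): for all exponents
`a+b+c ∈ {1,2,3}`, all admissible indices, and every bounded differentiable `F`
with bounded differential (with bounds `FB` and `DB`),
`|Cov(F(S_{i-1}, X_i, X_j, X_k), (X_{k+p}^{(i₁)})^a (X_{k+p+q}^{(i₂)})^b (X_{k+p+l}^{(i₃)})^c)|
  ≤ C (FB + DB) φ_{p,l}`. -/
def CovHyp {Ω : Type*} [MeasurableSpace Ω] {d : ℕ} (ν : Measure Ω)
    (X : ℕ → Ω → Fin d → ℝ) (C : ℝ) (φ : ℕ → ℕ → ℝ) : Prop :=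
  ∀ a b c : ℕ, 1 ≤ a + b + c → a + b + c ≤ 3 →
  ∀ i j k p q l : ℕ, 1 ≤ i → i ≤ j → j ≤ k → q ≤ l →
  ∀ i₁ i₂ i₃ : Fin d,
  ∀ F : (Fin d → ℝ) × (Fin d → ℝ) × (Fin d → ℝ) × (Fin d → ℝ) → ℝ,
  ∀ FB DB : ℝ, Differentiable ℝ F → (∀ x, |F x| ≤ FB) → (∀ x, ‖fderiv ℝ F x‖ ≤ DB) →
    |(∫ ω, F (Ssum X (i - 1) ω, X i ω, X j ω, X k ω) *
          ((X (k + p) ω i₁) ^ a * (X (k + p + q) ω i₂) ^ b * (X (k + p + l) ω i₃) ^ c) ∂ν)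
        - (∫ ω, F (Ssum X (i - 1) ω, X i ω, X j ω, X k ω) ∂ν) *
          (∫ ω, (X (k + p) ω i₁) ^ a * (X (k + p + q) ω i₂) ^ b
              * (X (k + p + l) ω i₃) ^ c ∂ν)|
      ≤ C * (FB + DB) * φ p l

/-- The standard Gaussian measure on `ℝ^d` (iid standard normal coordinates). -/
noncomputable def stdGaussian (d : ℕ) : Measure (Fin d → ℝ) :=
  Measure.pi fun _ => ProbabilityTheory.gaussianReal 0 1

/-- `γ` is the centered Gaussian measure on `ℝ^d` with covariance matrix `Sig2`:
the law of `A·Z` for a matrix `A` with `A Aᵀ = Sig2` and `Z` standard Gaussian. -/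
def IsCenteredGaussianCov {d : ℕ} (γ : Measure (Fin d → ℝ))
    (Sig2 : Matrix (Fin d) (Fin d) ℝ) : Prop :=
  ∃ A : Matrix (Fin d) (Fin d) ℝ, A * A.transpose = Sig2 ∧
    γ = Measure.map (fun z => A.mulVec z) (stdGaussian d)

open Finset

theorem abs_intervalIntegral_le_of_abs_le_one_of_vanishing {h : ℝ → ℝ} {R : ℝ} (hR : 0 ≤ R)
    (h_cont : Continuous h) (h_le : ∀ s, |h s| ≤ 1) (h_zero : ∀ s, R ≤ |s| → h s = 0) (t : ℝ) :
    |∫ s in (0 : ℝ)..t, h s| ≤ R := by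
  -- `h` vanishes between `t` and its projection `T` onto `[-R, R]`
  set T := max (-R) (min t R)
  have hT : |T| ≤ R := abs_le.2 ⟨le_max_left _ _, max_le (by linarith) (min_le_right _ _)⟩
  have h_tail : ∫ s in T..t, h s = 0 := by
    rw [intervalIntegral.integral_congr_ae (g := fun _ => 0) (ae_of_all _ fun s hs => h_zero s ?_),
      intervalIntegral.integral_zero]
    rw [le_abs]
    rcases Set.mem_uIoc.1 hs with ⟨h1, h2⟩ | ⟨h1, h2⟩
    · have hT' : min t R ≤ T := le_max_right _ _
      rcases min_choice t R with hc | hc <;> rw [hc] at hT' <;> [linarith; (left; linarith)]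
    · have hc : T = -R ∨ T = min t R := max_choice _ _
      rcases hc with hc | hc <;> rw [hc] at h2
      · right; linarith
      · linarith [min_le_left t R]
  calc |∫ s in (0 : ℝ)..t, h s| = |∫ s in (0 : ℝ)..T, h s| := by
        rw [← intervalIntegral.integral_add_adjacent_intervals (b := T)
          (h_cont.intervalIntegrable _ _) (h_cont.intervalIntegrable _ _), h_tail, add_zero]
    _ ≤ 1 * |T - 0| := (Real.norm_eq_abs _).symm.trans_le <|
        intervalIntegral.norm_integral_le_of_norm_le_const fun s _ =>
          (Real.norm_eq_abs _).trans_le (h_le s)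
    _ ≤ R := by simpa using hT

theorem exists_differentiable_clamp {M w : ℝ} (hM : 0 ≤ M) (hw : 0 < w) :
    ∃ f : ℝ → ℝ, Differentiable ℝ f ∧ (∀ t, |deriv f t| ≤ 1) ∧ (∀ t, |f t| ≤ M + w) ∧
      ∀ t, |t| ≤ M → f t = t := by
  set h : ℝ → ℝ := fun s => min 1 (max 0 ((M + w - |s|) / w))
  have h_cont : Continuous h := by fun_prop
  have h_le s : |h s| ≤ 1 :=
    abs_le.2 ⟨by linarith [le_min zero_le_one (le_max_left 0 ((M + w - |s|) / w))],
      min_le_left _ _⟩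
  have h_one {s : ℝ} (hs : |s| ≤ M) : h s = 1 :=
    min_eq_left (le_max_of_le_right ((le_div_iff₀ hw).2 (by linarith)))
  have h_zero s (hs : M + w ≤ |s|) : h s = 0 := by
    show min 1 (max 0 _) = 0
    rw [max_eq_left (div_nonpos_of_nonpos_of_nonneg (by linarith) hw.le), min_eq_right zero_le_one]
  have hf (t : ℝ) : HasDerivAt (fun t => ∫ s in (0 : ℝ)..t, h s) (h t) t :=
    h_cont.integral_hasStrictDerivAt 0 t |>.hasDerivAt
  refine ⟨fun t => ∫ s in (0 : ℝ)..t, h s, fun t => (hf t).differentiableAt,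
    fun t => (hf t).deriv ▸ h_le t,
    abs_intervalIntegral_le_of_abs_le_one_of_vanishing (by linarith) h_cont h_le h_zero,
    fun t ht => ?_⟩
  calc ∫ s in (0 : ℝ)..t, h s = ∫ s in (0 : ℝ)..t, (1 : ℝ) :=
        intervalIntegral.integral_congr fun s hs => h_one ?_
    _ = t := by simp
  rw [Set.mem_uIcc] at hs
  rw [abs_le] at ht ⊢
  rcases hs with hs | hs <;> constructor <;> linarith

theorem norm_fderiv_comp_clm_le {E : Type*} [NormedAddCommGroup E] [NormedSpace ℝ E]
    {f : ℝ → ℝ} (hf : Differentiable ℝ f) (π : E →L[ℝ] ℝ) (v : E) :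
    ‖fderiv ℝ (fun x => f (π x)) v‖ ≤ |deriv f (π v)| * ‖π‖ := by
  rw [show (fun x => f (π x)) = f ∘ π from rfl, fderiv_comp v (hf _) π.differentiableAt,
    π.fderiv, ← Real.norm_eq_abs, norm_deriv_eq_norm_fderiv]
  exact ContinuousLinearMap.opNorm_comp_le _ _

theorem sum_range_sum_range_of_toeplitz (c c' : ℕ → ℝ) (e : ℕ → ℕ → ℝ)
    (he : ∀ a k, e a (a + k) = c k) (he' : ∀ a k, e (a + k) a = c' k) (n : ℕ) :
    ∑ a ∈ range n, ∑ b ∈ range n, e a b =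
      n * c 0 + ∑ m ∈ range n, ∑ k ∈ range m, (c (k + 1) + c' (k + 1)) := by
  induction n generalizing e with
  | zero => simp
  | succ n ih =>
    -- peel off the first row and column; the rest is the same array shifted diagonally
    have hshift := ih (fun a b => e (a + 1) (b + 1))
      (fun a k => by simp only [add_right_comm a k 1, he])
      (fun a k => by simp only [add_right_comm a k 1, he'])
    have hrow k : e 0 k = c k := by simpa using he 0 k
    have hcol a : ∑ b ∈ range (n + 1), e (a + 1) b =
        ∑ b ∈ range n, e (a + 1) (b + 1) + c' (a + 1) := by
      rw [sum_range_succ', ← he' 0, zero_add]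
    rw [sum_range_succ', sum_range_succ' (e 0)]
    simp only [hcol, hrow, sum_add_distrib, hshift, sum_range_succ _ n]
    push_cast
    ring

theorem sum_range_sum_range_add_sum_range_mul (a : ℕ → ℝ) (n : ℕ) :
    ∑ m ∈ range n, ∑ k ∈ range m, a k + ∑ k ∈ range n, (k + 1) * a k =
      n * ∑ k ∈ range n, a k := by
  induction n with
  | zero => simp
  | succ n ih =>
    rw [sum_range_succ, sum_range_succ, add_add_add_comm, ih, sum_range_succ]
    push_cast
    ring

theorem Summable.of_succ_mul {b : ℕ → ℝ} (hb0 : ∀ k, 0 ≤ b k)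
    (hb : Summable fun k : ℕ => (k + 1) * b k) : Summable b :=
  hb.of_nonneg_of_le hb0 fun k => le_mul_of_one_le_left (hb0 k) (by simp)

theorem abs_sum_range_sum_range_sub_mul_tsum_le {a b : ℕ → ℝ} (hab : ∀ k, |a k| ≤ b k)
    (hb : Summable fun k : ℕ => (k + 1) * b k) (n : ℕ) :
    |∑ m ∈ range n, ∑ k ∈ range m, a k - n * ∑' k, a k| ≤ ∑' k : ℕ, (k + 1) * b k := by
  have hb_nonneg k : 0 ≤ b k := (abs_nonneg _).trans (hab k)
  have hb_tail : Summable fun k => b (k + n) :=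
    (summable_nat_add_iff n).2 (hb.of_succ_mul hb_nonneg)
  have ha : Summable a := (hb.of_succ_mul hb_nonneg).of_norm_bounded hab
  have hsplit : ∑ m ∈ range n, ∑ k ∈ range m, a k - n * ∑' k, a k =
      -(∑ k ∈ range n, (k + 1) * a k + n * ∑' k, a (k + n)) := by
    rw [← ha.sum_add_tsum_nat_add n]
    linear_combination sum_range_sum_range_add_sum_range_mul a n
  calc |∑ m ∈ range n, ∑ k ∈ range m, a k - n * ∑' k, a k|
      ≤ ∑ k ∈ range n, (k + 1) * b k + n * ∑' k, b (k + n) := by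
        rw [hsplit, abs_neg]
        refine (abs_add_le _ _).trans (add_le_add ?_ ?_)
        · refine (abs_sum_le_sum_abs _ _).trans (sum_le_sum fun k _ => ?_)
          rw [abs_mul, abs_of_nonneg (by positivity)]
          exact mul_le_mul_of_nonneg_left (hab k) (by positivity)
        · rw [abs_mul, Nat.abs_cast]
          refine mul_le_mul_of_nonneg_left ?_ n.cast_nonneg
          exact tsum_of_norm_bounded hb_tail.hasSum fun k => (Real.norm_eq_abs _).trans_le (hab _)
    _ ≤ ∑ k ∈ range n, (k + 1) * b k + ∑' k, ((k + n : ℕ) + 1) * b (k + n) := by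
        rw [← tsum_mul_left]
        gcongr ∑ k ∈ range n, (k + 1) * b k + ?_
        refine (hb_tail.mul_left _).tsum_le_tsum (fun k => ?_) ((summable_nat_add_iff n).2 hb)
        gcongr
        · exact hb_nonneg _
        · push_cast; linarith
    _ = ∑' k : ℕ, (k + 1) * b k := hb.sum_add_tsum_nat_add n

theorem summable_succ_mul_apply_zero {φ : ℕ → ℕ → ℝ} {r : ℕ} (hφ0 : ∀ p, 0 ≤ φ p 0)
    (hφsum : Summable fun p : ℕ => (p : ℝ) *
      (range (p / (r + 1) + 1)).sup' nonempty_range_add_one (φ p)) :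
    Summable fun k : ℕ => ((k : ℝ) + 1) * φ (k + 1) 0 := by
  have h : Summable fun p : ℕ => (p : ℝ) * φ p 0 :=
    hφsum.of_nonneg_of_le (fun p => mul_nonneg p.cast_nonneg (hφ0 p)) fun p =>
      mul_le_mul_of_nonneg_left (le_sup' (φ p) (mem_range.2 (p / (r + 1)).succ_pos)) p.cast_nonneg
  exact ((summable_nat_add_iff 1).2 h).congr fun k => by push_cast; ring

theorem tendsto_div_of_abs_sub_mul_le {u : ℕ → ℝ} {σ B : ℝ} (h : ∀ n, |u n - n * σ| ≤ B) :
    Tendsto (fun n : ℕ => u n / n) atTop (nhds σ) := by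
  rw [tendsto_iff_norm_sub_tendsto_zero]
  refine squeeze_zero' (.of_forall fun _ => norm_nonneg _) ?_
    (tendsto_const_div_atTop_nhds_zero_nat B)
  filter_upwards [eventually_gt_atTop 0] with n hn
  have hn' : (0 : ℝ) < n := by exact_mod_cast hn
  rw [Real.norm_eq_abs, show u n / n - σ = (u n - n * σ) / n by field_simp, abs_div,
    abs_of_pos hn']
  exact div_le_div_of_nonneg_right (h n) hn'.le

theorem Ssum_apply {Ω : Type*} {d : ℕ} (X : ℕ → Ω → Fin d → ℝ) (n : ℕ) (ω : Ω) (i : Fin d) :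
    Ssum X n ω i = ∑ a ∈ range n, X (a + 1) ω i := by
  induction n with
  | zero => simp [Ssum]
  | succ n ih =>
    rw [sum_range_succ, ← ih, Ssum, Ssum, sum_Icc_succ_top (by omega), Pi.add_apply]

noncomputable def lagCov {Ω : Type*} [MeasurableSpace Ω] {d : ℕ} (ν : Measure Ω)
    (X : ℕ → Ω → Fin d → ℝ) (k : ℕ) (i j : Fin d) : ℝ :=
  ∫ ω, X 1 ω i * X (k + 1) ω j ∂ν

noncomputable def longRunCov {Ω : Type*} [MeasurableSpace Ω] {d : ℕ} (ν : Measure Ω)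
    (X : ℕ → Ω → Fin d → ℝ) : Matrix (Fin d) (Fin d) ℝ :=
  Matrix.of fun i j => lagCov ν X 0 i j + ∑' k, (lagCov ν X (k + 1) i j + lagCov ν X (k + 1) j i)

section Covariance

variable {Ω : Type*} [MeasurableSpace Ω] {d : ℕ} {ν : Measure Ω} {X : ℕ → Ω → Fin d → ℝ}

theorem CovHyp.abs_lagCov_le {C : ℝ} {φ : ℕ → ℕ → ℝ} (hH : CovHyp ν X C φ) {M : ℝ}
    (hM : 0 ≤ M) (hX : ∀ᵐ ω ∂ν, ‖X 1 ω‖ ≤ M) {k : ℕ} {j : Fin d}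
    (hcent : ∫ ω, X (k + 1) ω j ∂ν = 0) (i : Fin d) :
    |lagCov ν X k i j| ≤ C * (M + 1) * φ k 0 := by
  unfold lagCov
  rw [add_comm k 1] at hcent ⊢
  have hw : ∀ w > 0, |∫ ω, X 1 ω i * X (1 + k) ω j ∂ν| ≤ C * (M + w + 1) * φ k 0 := by
    intro w hw
    obtain ⟨f, hf, hf', hfM, hf_id⟩ := exists_differentiable_clamp hM hw
    let π : (Fin d → ℝ) × (Fin d → ℝ) × (Fin d → ℝ) × (Fin d → ℝ) →L[ℝ] ℝ :=
      (ContinuousLinearMap.proj i).comp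
        ((ContinuousLinearMap.fst ℝ _ _).comp (ContinuousLinearMap.snd ℝ _ _))
    have hπ : ‖π‖ ≤ 1 := π.opNorm_le_bound zero_le_one fun v =>
      calc ‖v.2.1 i‖ ≤ ‖v.2.1‖ := norm_le_pi_norm _ i
        _ ≤ ‖v‖ := (norm_fst_le _).trans (norm_snd_le _)
        _ = 1 * ‖v‖ := (one_mul _).symm
    -- (H) with exponents `(1, 0, 0)`, indices `i = j = k = 1`, lag `p = k`, and `F = f ∘ π`
    have hcov := hH 1 0 0 le_rfl (by norm_num) 1 1 1 k 0 0 le_rfl le_rfl le_rfl le_rfl j j j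
      (fun v => f (π v)) (M + w) 1 (hf.comp π.differentiable) (fun v => hfM _)
      (fun v => (norm_fderiv_comp_clm_le hf π v).trans (mul_le_one₀ (hf' _) (norm_nonneg _) hπ))
    have hF : ∫ ω, f (X 1 ω i) * X (1 + k) ω j ∂ν = ∫ ω, X 1 ω i * X (1 + k) ω j ∂ν :=
      integral_congr_ae <| hX.mono fun ω hω => by
        simp only [hf_id _ ((norm_le_pi_norm _ i).trans hω)]
    simpa [π, hF, hcent] using hcov
  refine ge_of_tendsto (f := fun w => C * (M + w + 1) * φ k 0) (x := nhdsWithin 0 (Set.Ioi 0)) ?_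
    (eventually_nhdsWithin_of_forall hw)
  exact ((Continuous.tendsto (by fun_prop) 0).mono_left nhdsWithin_le_nhds).trans (by simp)

theorem Stationary.identDistrib (hstat : Stationary ν X) (hmeas : ∀ k, Measurable (X k)) (m : ℕ) :
    IdentDistrib (fun ω i => X (i + m) ω) (fun ω i => X i ω) ν ν :=
  ⟨(measurable_pi_lambda _ fun i => hmeas (i + m)).aemeasurable,
    (measurable_pi_lambda _ hmeas).aemeasurable, hstat m⟩

theorem Stationary.ae_norm_le (hstat : Stationary ν X) (hmeas : ∀ k, Measurable (X k)) {M : ℝ}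
    (hX : ∀ᵐ ω ∂ν, ‖X 0 ω‖ ≤ M) (k : ℕ) : ∀ᵐ ω ∂ν, ‖X k ω‖ ≤ M := by
  simpa using ((hstat.identDistrib hmeas k).comp (measurable_pi_apply 0)).symm.ae_snd
    (p := fun x => ‖x‖ ≤ M) (measurableSet_le (by fun_prop) (by fun_prop)) hX

theorem Stationary.integral_mul_shift (hstat : Stationary ν X) (hmeas : ∀ k, Measurable (X k))
    (a b m : ℕ) (i j : Fin d) :
    ∫ ω, X (a + m) ω i * X (b + m) ω j ∂ν = ∫ ω, X a ω i * X b ω j ∂ν :=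
  ((hstat.identDistrib hmeas m).comp (u := fun y : ℕ → Fin d → ℝ => y a i * y b j)
    (by fun_prop)).integral_eq

variable [IsFiniteMeasure ν] {M : ℝ}

theorem integrable_apply_mul_apply (hmeas : ∀ k, Measurable (X k))
    (hX : ∀ k, ∀ᵐ ω ∂ν, ‖X k ω‖ ≤ M) (a b : ℕ) (i j : Fin d) :
    Integrable (fun ω => X a ω i * X b ω j) ν :=
  .of_bound (by fun_prop) (M * M) <| (hX a).mp <| (hX b).mono fun ω hb ha => by
    rw [norm_mul]
    exact mul_le_mul ((norm_le_pi_norm _ i).trans ha) ((norm_le_pi_norm _ j).trans hb)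
      (norm_nonneg _) ((norm_nonneg _).trans ha)

theorem integral_apply_eq_zero (hmeas : ∀ k, Measurable (X k))
    (hX : ∀ k, ∀ᵐ ω ∂ν, ‖X k ω‖ ≤ M) (hcent : ∀ k, ∫ ω, X k ω ∂ν = 0) (k : ℕ) (j : Fin d) :
    ∫ ω, X k ω j ∂ν = 0 := by
  rw [← eval_integral fun j => .of_bound (by fun_prop) M <| (hX k).mono fun ω h =>
    (norm_le_pi_norm _ j).trans h, hcent, Pi.zero_apply]

theorem integral_Ssum_mul_Ssum (hmeas : ∀ k, Measurable (X k))
    (hX : ∀ k, ∀ᵐ ω ∂ν, ‖X k ω‖ ≤ M) (n : ℕ) (i j : Fin d) :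
    ∫ ω, Ssum X n ω i * Ssum X n ω j ∂ν =
      ∑ a ∈ range n, ∑ b ∈ range n, ∫ ω, X (a + 1) ω i * X (b + 1) ω j ∂ν := by
  simp_rw [Ssum_apply X, sum_mul_sum]
  rw [integral_finsetSum _ fun a _ => integrable_finsetSum _ fun b _ =>
    integrable_apply_mul_apply hmeas hX _ _ i j]
  exact sum_congr rfl fun a _ => integral_finsetSum _ fun b _ =>
    integrable_apply_mul_apply hmeas hX _ _ i j

theorem Stationary.integral_Ssum_mul_Ssum_eq (hstat : Stationary ν X)
    (hmeas : ∀ k, Measurable (X k)) (hX : ∀ k, ∀ᵐ ω ∂ν, ‖X k ω‖ ≤ M) (n : ℕ) (i j : Fin d) :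
    ∫ ω, Ssum X n ω i * Ssum X n ω j ∂ν = n * lagCov ν X 0 i j +
      ∑ m ∈ range n, ∑ k ∈ range m, (lagCov ν X (k + 1) i j + lagCov ν X (k + 1) j i) := by
  rw [integral_Ssum_mul_Ssum hmeas hX]
  refine sum_range_sum_range_of_toeplitz (lagCov ν X · i j) (lagCov ν X · j i)
    (fun a b => ∫ ω, X (a + 1) ω i * X (b + 1) ω j ∂ν) (fun a k => ?_) (fun a k => ?_) n
  · rw [lagCov, ← hstat.integral_mul_shift hmeas 1 (k + 1) a]
    ring_nf
  · rw [lagCov, ← hstat.integral_mul_shift hmeas 1 (k + 1) a]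
    ring_nf
    simp only [mul_comm]

theorem Stationary.abs_integral_Ssum_mul_Ssum_sub_le (hstat : Stationary ν X)
    (hmeas : ∀ k, Measurable (X k)) (hX : ∀ k, ∀ᵐ ω ∂ν, ‖X k ω‖ ≤ M) {i j : Fin d} {β : ℕ → ℝ}
    (hβ : ∀ k, |lagCov ν X (k + 1) i j + lagCov ν X (k + 1) j i| ≤ β k)
    (hβs : Summable fun k : ℕ => (k + 1) * β k) (n : ℕ) :
    |∫ ω, Ssum X n ω i * Ssum X n ω j ∂ν - n * longRunCov ν X i j| ≤ ∑' k : ℕ, (k + 1) * β k := by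
  rw [hstat.integral_Ssum_mul_Ssum_eq hmeas hX, longRunCov, Matrix.of_apply, mul_add,
    add_sub_add_left_eq_sub]
  exact abs_sum_range_sum_range_sub_mul_tsum_le hβ hβs n

end Covariance

theorem stmt1_general {d : ℕ} {Ω : Type*} [MeasurableSpace Ω]
    (ν : Measure Ω) [IsProbabilityMeasure ν]
    (X : ℕ → Ω → Fin d → ℝ) (hmeas : ∀ k, Measurable (X k))
    (hstat : Stationary ν X) (hcent : ∀ k, ∫ ω, X k ω ∂ν = 0)
    (C M : ℝ) (hC : 1 ≤ C) (hM : 1 ≤ M) (hbound : ∀ᵐ ω ∂ν, ‖X 0 ω‖ ≤ M)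
    (r : ℕ) (φ : ℕ → ℕ → ℝ) (hφ0 : ∀ p l, 0 ≤ φ p l)
    (hφsum : Summable fun p : ℕ => (p : ℝ) *
      (Finset.range (p / (r + 1) + 1)).sup' Finset.nonempty_range_add_one (φ p))
    (hH : CovHyp ν X C φ) :
    ∃ Sig2 : Matrix (Fin d) (Fin d) ℝ,
      (∀ i j, Summable fun k : ℕ =>
        |(∫ ω, X 1 ω i * X (k + 2) ω j ∂ν) + ∫ ω, X (k + 2) ω i * X 1 ω j ∂ν|) ∧
      (∀ i j, HasSum
        (fun k : ℕ =>
          (∫ ω, X 1 ω i * X (k + 2) ω j ∂ν) + ∫ ω, X (k + 2) ω i * X 1 ω j ∂ν)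
        (Sig2 i j - ∫ ω, X 1 ω i * X 1 ω j ∂ν)) ∧
      (∀ i j, Tendsto (fun n : ℕ => (∫ ω, Ssum X n ω i * Ssum X n ω j ∂ν) / n)
        atTop (nhds (Sig2 i j))) ∧
      (∀ n : ℕ, 1 ≤ n → ∀ i j,
        |(∫ ω, Ssum X n ω i * Ssum X n ω j ∂ν) - n * Sig2 i j|
          ≤ 4 * C * M * ∑' k : ℕ, ((k : ℝ) + 1) * φ (k + 1) 0) := by
  have hX := hstat.ae_norm_le hmeas hbound
  have hφ := summable_succ_mul_apply_zero (fun p => hφ0 p 0) hφsum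
  set β : ℕ → ℝ := fun k => 4 * C * M * φ (k + 1) 0
  have hβ i j k : |lagCov ν X (k + 1) i j + lagCov ν X (k + 1) j i| ≤ β k := by
    have hc (i j : Fin d) := hH.abs_lagCov_le (by linarith) (hX 1)
      (integral_apply_eq_zero hmeas hX hcent (k + 1 + 1) j) i
    nlinarith [abs_add_le (lagCov ν X (k + 1) i j) (lagCov ν X (k + 1) j i), hc i j, hc j i,
      mul_nonneg (mul_nonneg (by linarith : 0 ≤ C) (hφ0 (k + 1) 0)) (sub_nonneg.2 hM)]
  have hβsum : Summable β := (hφ.of_succ_mul fun k => hφ0 _ 0).mul_left _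
  have hrate n i j : |∫ ω, Ssum X n ω i * Ssum X n ω j ∂ν - n * longRunCov ν X i j| ≤
      4 * C * M * ∑' k : ℕ, ((k : ℝ) + 1) * φ (k + 1) 0 := by
    refine (hstat.abs_integral_Ssum_mul_Ssum_sub_le hmeas hX (hβ i j)
      ((hφ.mul_left (4 * C * M)).congr fun k => by ring) n).trans_eq ?_
    rw [← tsum_mul_left]
    exact tsum_congr fun k => by ring
  have hterm i j k : (∫ ω, X 1 ω i * X (k + 2) ω j ∂ν) + ∫ ω, X (k + 2) ω i * X 1 ω j ∂ν =
      lagCov ν X (k + 1) i j + lagCov ν X (k + 1) j i := by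
    simp only [lagCov, mul_comm (X _ _ i)]
  refine ⟨longRunCov ν X, fun i j => ?_, fun i j => ?_,
    fun i j => tendsto_div_of_abs_sub_mul_le (hrate · i j), fun n _ => hrate n⟩
  · simp only [hterm]
    exact hβsum.of_nonneg_of_le (fun _ => abs_nonneg _) (hβ i j)
  · simp only [hterm, longRunCov, Matrix.of_apply, lagCov, add_sub_cancel_left]
    exact (hβsum.of_norm_bounded (hβ i j)).hasSum

/-- Under hypothesis (H): the series
`Σ² = E[X₁^{⊗2}] + ∑_{k≥1} (E[X₁ ⊗ X_{k+1}] + E[X_{k+1} ⊗ X₁])` converges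
entrywise absolutely, `Σ² = lim (1/n) E[S_n^{⊗2}]`, and
`|E[S_n^{⊗2}] − n Σ²|_∞ ≤ 4CM ∑_{k≥1} k φ_{k,0}` for all `n ≥ 1`. -/
theorem stmt1 {d : ℕ} (hd : 1 ≤ d) {Ω : Type*} [MeasurableSpace Ω]
    (ν : Measure Ω) [IsProbabilityMeasure ν]
    (X : ℕ → Ω → Fin d → ℝ) (hmeas : ∀ k, Measurable (X k))
    (hstat : Stationary ν X) (hcent : ∀ k, ∫ ω, X k ω ∂ν = 0)
    (C M : ℝ) (hC : 1 ≤ C) (hM : 1 ≤ M) (hbound : ∀ᵐ ω ∂ν, ‖X 0 ω‖ ≤ M)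
    (r : ℕ) (φ : ℕ → ℕ → ℝ) (hφ0 : ∀ p l, 0 ≤ φ p l) (hφ1 : ∀ p l, φ p l ≤ 1)
    (hφsum : Summable fun p : ℕ => (p : ℝ) *
      (Finset.range (p / (r + 1) + 1)).sup' Finset.nonempty_range_add_one (φ p))
    (hH : CovHyp ν X C φ) :
    ∃ Sig2 : Matrix (Fin d) (Fin d) ℝ,
      (∀ i j, Summable fun k : ℕ =>
        |(∫ ω, X 1 ω i * X (k + 2) ω j ∂ν) + ∫ ω, X (k + 2) ω i * X 1 ω j ∂ν|) ∧
      (∀ i j, HasSum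
        (fun k : ℕ =>
          (∫ ω, X 1 ω i * X (k + 2) ω j ∂ν) + ∫ ω, X (k + 2) ω i * X 1 ω j ∂ν)
        (Sig2 i j - ∫ ω, X 1 ω i * X 1 ω j ∂ν)) ∧
      (∀ i j, Tendsto (fun n : ℕ => (∫ ω, Ssum X n ω i * Ssum X n ω j ∂ν) / n)
        atTop (nhds (Sig2 i j))) ∧
      (∀ n : ℕ, 1 ≤ n → ∀ i j,
        |(∫ ω, Ssum X n ω i * Ssum X n ω j ∂ν) - n * Sig2 i j|
          ≤ 4 * C * M * ∑' k : ℕ, ((k : ℝ) + 1) * φ (k + 1) 0) :=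
  stmt1_general ν X hmeas hstat hcent C M hC hM hbound r φ hφ0 hφsum hH
end

section
/- Let P, Q be probability measures on ℝ^d with finite first moments, let φ: ℝ^d → ℝ be Lipschitz with Lipschitz constant L_φ ≤ 1, and let M > 0. Then |∫ φ dQ − ∫ φ dP| ≤ 2·∫ (|x|_∞ − M)·1_{|x|_∞ > M} dP(x) + |∫ |x|_∞ dQ(x) − ∫ |x|_∞ dP(x)| + 2(M+1)·BL(Q, P). -/
open MeasureTheory Filter

/-!
Subtracting `φ 0` gives `|φ x| ≤ ‖x‖_∞`. The clamp `g` of `φ` to `[-M, M]` is `1`-Lipschitz,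
bounded by `M` and within `(‖x‖_∞ - M)⁺` of `φ`, and `g / (M + 1)` is admissible for `BL`; hence
`|∫ φ dQ - ∫ φ dP| ≤ T_Q + T_P + (M + 1) BL(Q, P)`, with `T` the tail `∫ (‖x‖_∞ - M)⁺`.
Since `(r - M)⁺ = r - min r M`, `T_Q - T_P` is the difference of the first moments minus that of
the truncated moments `∫ min ‖x‖_∞ M`, which is again at most `(M + 1) BL(Q, P)`.
-/

/-- The bounded-Lipschitz distance between two probability measures on `ℝ^d`
(with the sup norm), as the supremum of `|∫ ψ dP − ∫ ψ dQ|` over all `ψ` with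
`‖ψ‖_∞ + L_ψ ≤ 1`. -/
noncomputable def BLdist {d : ℕ} (P Q : Measure (Fin d → ℝ)) : ℝ :=
  sSup {u : ℝ | ∃ (ψ : (Fin d → ℝ) → ℝ) (K : NNReal) (Cb : ℝ),
    LipschitzWith K ψ ∧ (∀ x, |ψ x| ≤ Cb) ∧ Cb + (K : ℝ) ≤ 1 ∧
    u = |(∫ x, ψ x ∂P) - ∫ x, ψ x ∂Q|}

theorem abs_sub_max_min_le_max_sub {a r : ℝ} (h : |a| ≤ r) (M : ℝ) :
    |a - max (min a M) (-M)| ≤ max (r - M) 0 := by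
  grind

section TruncatedMoment

variable {α : Type*} [MeasurableSpace α] {μ : Measure α} [IsFiniteMeasure μ]

theorem abs_integral_sub_integral_clamp_le {f r : α → ℝ} (hf : Integrable f μ)
    (hr : Integrable r μ) (hfr : ∀ x, |f x| ≤ r x) (M : ℝ) :
    |∫ x, f x ∂μ - ∫ x, max (min (f x) M) (-M) ∂μ| ≤ ∫ x, max (r x - M) 0 ∂μ := by
  have hclamp : Integrable (fun x => max (min (f x) M) (-M)) μ :=
    (hf.inf (integrable_const M)).sup (integrable_const (-M))
  rw [← integral_sub hf hclamp]
  calc |∫ x, f x - max (min (f x) M) (-M) ∂μ|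
      ≤ ∫ x, |f x - max (min (f x) M) (-M)| ∂μ := abs_integral_le_integral_abs
    _ ≤ ∫ x, max (r x - M) 0 ∂μ :=
      integral_mono (hf.sub hclamp).abs (hr.sub (integrable_const M)).pos_part
        fun x => abs_sub_max_min_le_max_sub (hfr x) M

theorem integral_max_sub_zero_eq_integral_sub_integral_min {r : α → ℝ} (hr : Integrable r μ)
    (M : ℝ) : ∫ x, max (r x - M) 0 ∂μ = ∫ x, r x ∂μ - ∫ x, min (r x) M ∂μ := by
  have hpoint : ∀ x, max (r x - M) 0 = r x - min (r x) M := fun x => by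
    rw [← max_sub_sub_left, sub_self, max_comm]
  simp_rw [hpoint]
  exact integral_sub hr (hr.inf (integrable_const M))

end TruncatedMoment

theorem LipschitzWith.integrable_of_integrable_norm {E : Type*} [NormedAddCommGroup E]
    [MeasurableSpace E] [OpensMeasurableSpace E] {μ : Measure E} [IsFiniteMeasure μ]
    {K : NNReal} {φ : E → ℝ} (hφ : LipschitzWith K φ)
    (hμ : Integrable (fun x => ‖x‖) μ) :
    Integrable φ μ := by
  refine ((integrable_const |φ 0|).add (hμ.const_mul K)).mono'
    hφ.continuous.aestronglyMeasurable (ae_of_all _ fun x => ?_)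
  calc ‖φ x‖ ≤ ‖φ 0‖ + ‖φ x - φ 0‖ := norm_le_insert' _ _
    _ ≤ |φ 0| + K * ‖x‖ := by
      simpa [← dist_eq_norm] using hφ.dist_le_mul x 0

section BoundedLipschitz

variable {d : ℕ} {P Q : Measure (Fin d → ℝ)} [IsProbabilityMeasure P] [IsProbabilityMeasure Q]

theorem abs_integral_sub_le_BLdist {ψ : (Fin d → ℝ) → ℝ} {K : NNReal} {C : ℝ}
    (hψ : LipschitzWith K ψ) (hC : ∀ x, |ψ x| ≤ C) (hCK : C + K ≤ 1) :
    |∫ x, ψ x ∂P - ∫ x, ψ x ∂Q| ≤ BLdist P Q := by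
  refine le_csSup ⟨2, ?_⟩ ⟨ψ, K, C, hψ, hC, hCK, rfl⟩
  rintro _ ⟨ψ, K, C, -, hC, hCK, rfl⟩
  have hbound : ∀ (μ : Measure (Fin d → ℝ)) [IsProbabilityMeasure μ],
      |∫ x, ψ x ∂μ| ≤ 1 := fun μ _ => by
    simpa using (norm_integral_le_of_norm_le_const (μ := μ) (f := ψ) (ae_of_all _ hC)).trans
      (by simpa using (le_add_of_nonneg_right K.coe_nonneg).trans hCK)
  linarith [abs_sub (∫ x, ψ x ∂P) (∫ x, ψ x ∂Q), hbound P, hbound Q]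

theorem abs_integral_sub_le_mul_BLdist {ψ : (Fin d → ℝ) → ℝ} {K : NNReal} {C : ℝ}
    (hψ : LipschitzWith K ψ) (hC : ∀ x, |ψ x| ≤ C) :
    |∫ x, ψ x ∂P - ∫ x, ψ x ∂Q| ≤ (C + K) * BLdist P Q := by
  rcases (add_nonneg ((abs_nonneg _).trans (hC 0)) K.coe_nonneg).eq_or_lt with hCK | hCK
  · have hψ0 : ∀ x, ψ x = 0 := fun x =>
      abs_nonpos_iff.1 ((hC x).trans (by linarith [K.coe_nonneg]))
    simp [hψ0, ← hCK]
  set c := (C + K)⁻¹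
  have hc : 0 < c := inv_pos.2 hCK
  have hscaled := abs_integral_sub_le_BLdist (P := P) (Q := Q) (ψ := fun x => c * ψ x)
    ((lipschitzWith_smul c).comp hψ) (C := c * C)
    (fun x => by rw [abs_mul, abs_of_pos hc]; exact mul_le_mul_of_nonneg_left (hC x) hc.le)
    (by rw [NNReal.coe_mul, coe_nnnorm, Real.norm_of_nonneg hc.le, ← mul_add,
      inv_mul_cancel₀ hCK.ne'])
  rwa [integral_const_mul, integral_const_mul, ← mul_sub, abs_mul, abs_of_pos hc,
    inv_mul_le_iff₀ hCK] at hscaled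

theorem integral_max_norm_sub_le (hP : Integrable (fun x => ‖x‖) P)
    (hQ : Integrable (fun x => ‖x‖) Q) {M : ℝ} (hM : 0 ≤ M) :
    ∫ x, max (‖x‖ - M) 0 ∂Q ≤ ∫ x, max (‖x‖ - M) 0 ∂P
      + |∫ x, ‖x‖ ∂Q - ∫ x, ‖x‖ ∂P| + (M + 1) * BLdist Q P := by
  have hmin := abs_integral_sub_le_mul_BLdist (P := Q) (Q := P)
    (lipschitzWith_one_norm.min_const M) (C := M)
    fun x => (abs_of_nonneg (le_min (norm_nonneg x) hM)).trans_le (min_le_right _ _)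
  rw [NNReal.coe_one] at hmin
  rw [integral_max_sub_zero_eq_integral_sub_integral_min hP,
    integral_max_sub_zero_eq_integral_sub_integral_min hQ]
  linarith [le_abs_self (∫ x, ‖x‖ ∂Q - ∫ x, ‖x‖ ∂P),
    neg_abs_le (∫ x, min ‖x‖ M ∂Q - ∫ x, min ‖x‖ M ∂P)]

theorem abs_integral_sub_le_of_lipschitzWith_one_of_map_zero
    (hP : Integrable (fun x => ‖x‖) P) (hQ : Integrable (fun x => ‖x‖) Q)
    {φ : (Fin d → ℝ) → ℝ} (hφ : LipschitzWith 1 φ) (hφ0 : φ 0 = 0) {M : ℝ}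
    (hM : 0 ≤ M) :
    |∫ x, φ x ∂Q - ∫ x, φ x ∂P| ≤
      2 * ∫ x, max (‖x‖ - M) 0 ∂P + |∫ x, ‖x‖ ∂Q - ∫ x, ‖x‖ ∂P|
        + 2 * (M + 1) * BLdist Q P := by
  have hφx : ∀ x, |φ x| ≤ ‖x‖ := fun x => by
    simpa [hφ0, ← dist_eq_norm, Real.dist_eq] using hφ.dist_le_mul x 0
  set g := fun x => max (min (φ x) M) (-M)
  have hg : |∫ x, g x ∂Q - ∫ x, g x ∂P| ≤ (M + 1) * BLdist Q P := by
    simpa using abs_integral_sub_le_mul_BLdist ((hφ.min_const M).max_const (-M))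
      fun x => abs_le.2 ⟨le_max_right _ _, max_le (min_le_right _ _) (by linarith)⟩
  have hgQ := abs_integral_sub_integral_clamp_le (hφ.integrable_of_integrable_norm hQ) hQ hφx M
  have hgP := abs_integral_sub_integral_clamp_le (hφ.integrable_of_integrable_norm hP) hP hφx M
  have htail := integral_max_norm_sub_le hP hQ hM
  calc |∫ x, φ x ∂Q - ∫ x, φ x ∂P|
      ≤ |∫ x, φ x ∂Q - ∫ x, g x ∂Q| + |∫ x, g x ∂Q - ∫ x, g x ∂P|
        + |∫ x, g x ∂P - ∫ x, φ x ∂P| :=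
        (abs_sub_le _ _ _).trans (add_le_add_left (abs_sub_le _ _ _) _)
    _ ≤ _ := by rw [abs_sub_comm (∫ x, g x ∂P)]; linarith

end BoundedLipschitz

theorem stmt3_general {d : ℕ}
    (P Q : Measure (Fin d → ℝ)) [IsProbabilityMeasure P] [IsProbabilityMeasure Q]
    (hP : Integrable (fun x => ‖x‖) P) (hQ : Integrable (fun x => ‖x‖) Q)
    (φ : (Fin d → ℝ) → ℝ) (hφ : LipschitzWith 1 φ) (M : ℝ) (hM : 0 < M) :
    |(∫ x, φ x ∂Q) - ∫ x, φ x ∂P| ≤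
      2 * (∫ x, max (‖x‖ - M) 0 ∂P)
      + |(∫ x, ‖x‖ ∂Q) - ∫ x, ‖x‖ ∂P|
      + 2 * (M + 1) * BLdist Q P := by
  have hcentered : LipschitzWith 1 (fun x => φ x - φ 0) := by
    simpa using hφ.sub (LipschitzWith.const (φ 0))
  have hshift : ∀ (μ : Measure (Fin d → ℝ)) [IsProbabilityMeasure μ],
      Integrable (fun x => ‖x‖) μ → ∫ x, φ x - φ 0 ∂μ = ∫ x, φ x ∂μ - φ 0 := by
    intro μ _ hμ
    rw [integral_sub (hφ.integrable_of_integrable_norm hμ) (integrable_const _)]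
    simp
  have h := abs_integral_sub_le_of_lipschitzWith_one_of_map_zero hP hQ hcentered (sub_self _) hM.le
  rwa [hshift P hP, hshift Q hQ, sub_sub_sub_cancel_right] at h

/-- For probability measures `P, Q` on `ℝ^d` with finite first
moments, `φ` 1-Lipschitz (for the sup norm) and `M > 0`,
`|∫ φ dQ − ∫ φ dP| ≤ 2 ∫ (|x|_∞ − M)⁺ dP + |∫|x|_∞ dQ − ∫|x|_∞ dP| + 2(M+1)·BL(Q,P)`. -/
theorem stmt3 {d : ℕ} (hd : 1 ≤ d)
    (P Q : Measure (Fin d → ℝ)) [IsProbabilityMeasure P] [IsProbabilityMeasure Q]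
    (hP : Integrable (fun x => ‖x‖) P) (hQ : Integrable (fun x => ‖x‖) Q)
    (φ : (Fin d → ℝ) → ℝ) (hφ : LipschitzWith 1 φ) (M : ℝ) (hM : 0 < M) :
    |(∫ x, φ x ∂Q) - ∫ x, φ x ∂P| ≤
      2 * (∫ x, max (‖x‖ - M) 0 ∂P)
      + |(∫ x, ‖x‖ ∂Q) - ∫ x, ‖x‖ ∂P|
      + 2 * (M + 1) * BLdist Q P :=
  stmt3_general P Q hP hQ φ hφ M hM
end

section
/- Assume a ∈ L^∞(Ω, ℝ^d) with ∫ a dν = 0, let B₁ be a random vector distributed as the centered Gaussian measure on ℝ^d with covariance matrix D(a), and suppose B > 0 is such that for every integer n ≥ 1 and every Lipschitz φ: ℝ^d → ℝ one has |E_ν̃[φ((1/√n)·∑_{k=0}^{n−1} a(X_k))] − E[φ(B₁)]| ≤ B·L_φ/√n. Then for every real ε > 0 and every Lipschitz function φ: ℝ^d → ℝ, sup_{s>0, x∈ℝ^d} |E_ν̃[φ(x + ε·∑_{k=0}^{⌊s/ε²⌋} a(X_k))] − E[φ(x + √s·B₁)]| ≤ ε·L_φ·(B + ‖a‖_{L¹(ν)}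 + E[|B₁|_∞]). -/
open MeasureTheory ProbabilityTheory Filter
open scoped ENNReal NNReal

/-- The σ-algebra `σ(X_m : m ≤ n)` on `Ω^ℤ` generated by the coordinates up to time `n`. -/
def pastFiltration (Ω : Type*) [m : MeasurableSpace Ω] (n : ℤ) :
    MeasurableSpace (ℤ → Ω) :=
  ⨆ i : ℤ, ⨆ _ : i ≤ n, MeasurableSpace.comap (fun ωt : ℤ → Ω => ωt i) m

/-- `ν'` is the law of the stationary Markov chain on `Ω^ℤ` with transition kernel
`(1-α)·δ_{T(x)} + α·ν`. -/
def KnudsenChain {Ω : Type*} [MeasurableSpace Ω] (ν : Measure Ω) (T : Ω → Ω)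
    (α : ℝ) (ν' : Measure (ℤ → Ω)) : Prop :=
  (∀ n : ℤ, Measure.map (fun ωt : ℤ → Ω => ωt n) ν' = ν) ∧
  (∀ n : ℤ, ∀ f : Ω → ℝ, Measurable f → (∃ Cf, ∀ x, |f x| ≤ Cf) →
    (ν'[(fun ωt : ℤ → Ω => f (ωt (n + 1))) | pastFiltration Ω n])
      =ᵐ[ν'] fun ωt => (1 - α) * f (T (ωt n)) + α * ∫ x, f x ∂ν)

/-- The `ℤ`-indexed iterates of an invertible map `T` with inverse `Tinv`. -/
def iterZ {Ω : Type*} (T Tinv : Ω → Ω) : ℤ → Ω → Ω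
  | Int.ofNat n => T^[n]
  | Int.negSucc n => Tinv^[n + 1]

/-- The asymptotic covariance matrix
`D(a) = ∑_{k ∈ ℤ} (1-α)^{|k|} E_ν[a ⊗ (a ∘ T^k)]`. -/
noncomputable def Dmat {Ω : Type*} [MeasurableSpace Ω] (ν : Measure Ω)
    (T Tinv : Ω → Ω) (α : ℝ) {d : ℕ} (a : Ω → Fin d → ℝ) :
    Matrix (Fin d) (Fin d) ℝ :=
  Matrix.of fun i j =>
    ∑' k : ℤ, (1 - α) ^ k.natAbs * ∫ ω, a ω i * a (iterZ T Tinv k ω) j ∂ν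


/-!
With `n = ⌊s/ε²⌋ + 1` and `c = ε√n`, the sum `ε ∑_{k<n} a(X_k)` is `c` times the normalized sum
`n^{-1/2} ∑_{k<n} a(X_k)`, so the assumed rate, applied to the `K c`-Lipschitz function
`y ↦ φ(x + c y)`, compares it with `x + c B₁` at cost `ε K B`. Since `s < c² ≤ s + ε²`, we have
`0 ≤ c - √s ≤ ε`, and replacing `c` by `√s` costs at most `ε K E|B₁|_∞`.
-/

lemma isGaussian_pi_gaussianReal (ι : Type*) [Fintype ι] :
    IsGaussian (Measure.pi fun _ : ι => gaussianReal 0 1) := by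
  rw [← isGaussian_map_equiv_iff (PiLp.continuousLinearEquiv 2 ℝ (fun _ : ι => ℝ)).symm]
  convert isGaussian_stdGaussian (E := EuclideanSpace ℝ ι)
  exact map_pi_eq_stdGaussian

lemma IsCenteredGaussianCov.isGaussian {d : ℕ} {γ : Measure (Fin d → ℝ)}
    {S : Matrix (Fin d) (Fin d) ℝ} (hγ : IsCenteredGaussianCov γ S) : IsGaussian γ := by
  obtain ⟨A, -, rfl⟩ := hγ
  have : IsGaussian (stdGaussian d) := isGaussian_pi_gaussianReal (Fin d)
  exact isGaussian_map (μ := stdGaussian d) (LinearMap.toContinuousLinearMap (Matrix.mulVecLin A))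

lemma LipschitzWith.integrable {E : Type*} [NormedAddCommGroup E] [MeasurableSpace E]
    [OpensMeasurableSpace E] {μ : Measure E} [IsFiniteMeasure μ] (hμ : Integrable id μ)
    {f : E → ℝ} {K : ℝ≥0} (hf : LipschitzWith K f) : Integrable f μ := by
  refine ((hμ.norm.const_mul K).add (integrable_const |f 0|)).mono'
    hf.continuous.aestronglyMeasurable (Eventually.of_forall fun y => ?_)
  have := hf.dist_le_mul y 0
  rw [Real.dist_eq, dist_zero_right] at this
  rw [Real.norm_eq_abs]
  simp only [Pi.add_apply, id]
  linarith [abs_sub_abs_le_abs_sub (f y) (f 0)]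

lemma LipschitzWith.comp_add_smul {E F : Type*} [NormedAddCommGroup E] [NormedSpace ℝ E]
    [PseudoMetricSpace F] {φ : E → F} {K : ℝ≥0} (hφ : LipschitzWith K φ) (x : E) (c : ℝ) :
    LipschitzWith (K * ‖c‖₊) fun y => φ (x + c • y) :=
  LipschitzWith.of_dist_le_mul fun y₁ y₂ => by
    calc dist (φ (x + c • y₁)) (φ (x + c • y₂)) ≤ K * dist (x + c • y₁) (x + c • y₂) :=
          hφ.dist_le_mul _ _
      _ = ↑(K * ‖c‖₊) * dist y₁ y₂ := by
          rw [dist_add_left, dist_smul₀, NNReal.coe_mul, coe_nnnorm, mul_assoc]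

lemma abs_integral_comp_add_smul_sub_le {E : Type*} [NormedAddCommGroup E] [NormedSpace ℝ E]
    [MeasurableSpace E] [OpensMeasurableSpace E] (μ : Measure E) [IsFiniteMeasure μ]
    (hμ : Integrable id μ) {φ : E → ℝ} {K : ℝ≥0} (hφ : LipschitzWith K φ) (x : E) (c t : ℝ) :
    |(∫ y, φ (x + c • y) ∂μ) - ∫ y, φ (x + t • y) ∂μ| ≤ K * |c - t| * ∫ y, ‖y‖ ∂μ := by
  rw [← integral_sub ((hφ.comp_add_smul x c).integrable hμ) ((hφ.comp_add_smul x t).integrable hμ),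
    ← Real.norm_eq_abs, ← integral_const_mul]
  refine norm_integral_le_of_norm_le (hμ.norm.const_mul _) (Eventually.of_forall fun y => ?_)
  calc ‖φ (x + c • y) - φ (x + t • y)‖ ≤ K * dist (x + c • y) (x + t • y) := by
        rw [← dist_eq_norm]; exact hφ.dist_le_mul _ _
    _ = K * |c - t| * ‖y‖ := by
        rw [dist_add_left, dist_eq_norm, ← sub_smul, norm_smul, Real.norm_eq_abs, mul_assoc]

lemma abs_mul_sqrt_floor_add_one_sub_sqrt_le {s ε : ℝ} (hs : 0 ≤ s) (hε : 0 < ε) :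
    |ε * √((⌊s / ε ^ 2⌋₊ + 1 : ℕ) : ℝ) - √s| ≤ ε := by
  set n : ℕ := ⌊s / ε ^ 2⌋₊ + 1
  have hn : s / ε ^ 2 < n ∧ (n : ℝ) ≤ s / ε ^ 2 + 1 := by
    refine ⟨by exact_mod_cast Nat.lt_floor_add_one _, ?_⟩
    push_cast [n]
    linarith [Nat.floor_le (div_nonneg hs (sq_nonneg ε))]
  have hε2 : 0 < ε ^ 2 := by positivity
  have hlow : s ≤ ε ^ 2 * n := by
    have := (div_lt_iff₀ hε2).1 hn.1; linarith
  have hup : ε ^ 2 * n ≤ s + ε ^ 2 := by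
    have := mul_le_mul_of_nonneg_left hn.2 hε2.le
    rwa [mul_add, mul_div_cancel₀ _ hε2.ne', mul_one] at this
  have hc : ε * √(n : ℝ) = √(ε ^ 2 * n) := by
    rw [Real.sqrt_mul hε2.le, Real.sqrt_sq hε.le]
  rw [hc, abs_of_nonneg (sub_nonneg.2 (Real.sqrt_le_sqrt hlow))]
  have : √(s + ε ^ 2) ≤ √s + ε := by
    rw [Real.sqrt_le_left (by positivity), add_sq, Real.sq_sqrt hs]
    nlinarith [Real.sqrt_nonneg s]
  linarith [Real.sqrt_le_sqrt hup]

lemma abs_integral_comp_add_smul_sub_le_of_rate {X E : Type*} [MeasurableSpace X]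
    [NormedAddCommGroup E] [NormedSpace ℝ E] [MeasurableSpace E] (μ : Measure X)
    (γ : Measure E) (S : X → E) {n : ℕ} (hn : 0 < n) {B : ℝ}
    (hrate : ∀ (φ : E → ℝ) (K : ℝ≥0), LipschitzWith K φ →
      |(∫ ω, φ ((√n)⁻¹ • S ω) ∂μ) - ∫ y, φ y ∂γ| ≤ B * K / √n)
    {ε : ℝ} (hε : 0 ≤ ε) {φ : E → ℝ} {K : ℝ≥0} (hφ : LipschitzWith K φ) (x : E) :
    |(∫ ω, φ (x + ε • S ω) ∂μ) - ∫ y, φ (x + (ε * √n) • y) ∂γ| ≤ ε * K * B := by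
  have hsqrt : 0 < √(n : ℝ) := Real.sqrt_pos.2 (Nat.cast_pos.2 hn)
  have hrescale : ∀ v : E, (ε * √n) • (√n)⁻¹ • v = ε • v := fun v => by
    rw [smul_smul, mul_assoc, mul_inv_cancel₀ hsqrt.ne', mul_one]
  have h := hrate _ _ (hφ.comp_add_smul x (ε * √n))
  rw [NNReal.coe_mul, coe_nnnorm, Real.norm_eq_abs, abs_of_nonneg (mul_nonneg hε hsqrt.le),
    show B * (K * (ε * √n)) / √n = ε * K * B by field_simp] at h
  simpa only [hrescale] using h

theorem stmt6_general {Ω : Type*} [MeasurableSpace Ω] (ν : Measure Ω)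
    (T Tinv : Ω → Ω)
    (α : ℝ)
    (ν' : Measure (ℤ → Ω))
    (d : ℕ) (a : Ω → Fin d → ℝ)
    (γ : Measure (Fin d → ℝ)) (hγ : IsCenteredGaussianCov γ (Dmat ν T Tinv α a))
    (B : ℝ)
    (hrate : ∀ n : ℕ, 1 ≤ n →
      ∀ (φ : (Fin d → ℝ) → ℝ) (K : ℝ≥0), LipschitzWith K φ →
        |(∫ ωt, φ ((Real.sqrt n)⁻¹ • ∑ k ∈ Finset.range n, a (ωt (k : ℤ))) ∂ν')
            - ∫ y, φ y ∂γ|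
          ≤ B * K / Real.sqrt n) :
    ∀ ε : ℝ, 0 < ε → ∀ (φ : (Fin d → ℝ) → ℝ) (K : ℝ≥0), LipschitzWith K φ →
      ∀ s : ℝ, 0 < s → ∀ x : Fin d → ℝ,
        |(∫ ωt, φ (x + ε • ∑ k ∈ Finset.range (⌊s / ε ^ 2⌋₊ + 1), a (ωt (k : ℤ))) ∂ν')
            - ∫ y, φ (x + Real.sqrt s • y) ∂γ|
          ≤ ε * K * (B + (∫ ω, ‖a ω‖ ∂ν) + ∫ y, ‖y‖ ∂γ) := by
  intro ε hε φ K hφ s hs x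
  have : IsGaussian γ := hγ.isGaussian
  set n := ⌊s / ε ^ 2⌋₊ + 1
  have hn : 1 ≤ n := Nat.le_add_left 1 _
  have hrescaled := abs_integral_comp_add_smul_sub_le_of_rate ν' γ _ hn (hrate n hn) hε.le hφ x
  have hgauss := abs_integral_comp_add_smul_sub_le γ IsGaussian.integrable_id hφ x
    (ε * √n) (√s)
  have hscale := abs_mul_sqrt_floor_add_one_sub_sqrt_le hs.le hε
  have hKε := mul_le_mul_of_nonneg_right (mul_le_mul_of_nonneg_left hscale K.coe_nonneg)
    (integral_nonneg fun y => norm_nonneg y : 0 ≤ ∫ y, ‖y‖ ∂γ)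
  have ha : 0 ≤ ε * K * ∫ ω, ‖a ω‖ ∂ν :=
    mul_nonneg (by positivity) (integral_nonneg fun ω => norm_nonneg _)
  linarith [abs_sub_le (∫ ωt, φ (x + ε • ∑ k ∈ Finset.range n, a (ωt k)) ∂ν')
    (∫ y, φ (x + (ε * √n) • y) ∂γ) (∫ y, φ (x + √s • y) ∂γ)]

/-- Diffusive-limit consequence of the Kantorovich rate: for every
`ε > 0`, every Lipschitz `φ`, uniformly in `s > 0` and `x ∈ ℝ^d`,
`|E[φ(x + ε ∑_{k=0}^{⌊s/ε²⌋} a(X_k))] − E[φ(x + √s B₁)]| ≤ ε L_φ (B + ‖a‖_{L¹} + E|B₁|_∞)`. -/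
theorem stmt6 {Ω : Type*} [MeasurableSpace Ω] (ν : Measure Ω) [IsProbabilityMeasure ν]
    (T Tinv : Ω → Ω) (hT : MeasurePreserving T ν ν) (hTinv : Measurable Tinv)
    (hinv1 : Function.LeftInverse Tinv T) (hinv2 : Function.RightInverse Tinv T)
    (α : ℝ) (hα0 : 0 < α) (hα1 : α < 1)
    (ν' : Measure (ℤ → Ω)) [IsProbabilityMeasure ν'] (hchain : KnudsenChain ν T α ν')
    (d : ℕ) (hd : 1 ≤ d) (a : Ω → Fin d → ℝ) (hameas : Measurable a)
    (hacent : ∫ ω, a ω ∂ν = 0) (habdd : MemLp a ⊤ ν)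
    (γ : Measure (Fin d → ℝ)) (hγ : IsCenteredGaussianCov γ (Dmat ν T Tinv α a))
    (B : ℝ) (hB : 0 < B)
    (hrate : ∀ n : ℕ, 1 ≤ n →
      ∀ (φ : (Fin d → ℝ) → ℝ) (K : ℝ≥0), LipschitzWith K φ →
        |(∫ ωt, φ ((Real.sqrt n)⁻¹ • ∑ k ∈ Finset.range n, a (ωt (k : ℤ))) ∂ν')
            - ∫ y, φ y ∂γ|
          ≤ B * K / Real.sqrt n) :
    ∀ ε : ℝ, 0 < ε → ∀ (φ : (Fin d → ℝ) → ℝ) (K : ℝ≥0), LipschitzWith K φ →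
      ∀ s : ℝ, 0 < s → ∀ x : Fin d → ℝ,
        |(∫ ωt, φ (x + ε • ∑ k ∈ Finset.range (⌊s / ε ^ 2⌋₊ + 1), a (ωt (k : ℤ))) ∂ν')
            - ∫ y, φ (x + Real.sqrt s • y) ∂γ|
          ≤ ε * K * (B + (∫ ω, ‖a ω‖ ∂ν) + ∫ y, ‖y‖ ∂γ) :=
  stmt6_general ν T Tinv α ν' d a γ hγ B hrate
end

section
/- Let a ∈ L²(Ω, ℝ^d) with ∫ a dν = 0. Then for every integer k ≥ 0, E_ν̃[a(X_0) ⊗ a(X_k)] = (1−α)^k·E_ν[a ⊗ (a∘T^k)]. Moreover the limit D(a) := lim_{n→∞} (1/n)·E_ν̃[(∑_{k=0}^{n−1} a(X_k)) ⊗ (∑_{k=0}^{n−1} a(X_k))] exists and equals ∑_{k∈ℤ} (1−α)^{|k|}·E_ν[a ⊗ (a∘T^k)]. -/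
open MeasureTheory ProbabilityTheory Filter
open scoped ENNReal NNReal

/-! Pulling the bounded factor `f(X_m)` out of the conditional expectation given the past, the
Markov property gives `E[f(X_m) g(X_{n+1})] = (1-α) E[f(X_m) g(T X_n)] + α E f · E g`; iterating,
`E[f(X_m) g(X_{m+k})] = (1-α)^k E_ν[f · g∘T^k] + (1-(1-α)^k) E f · E g`. Truncation and dominated
convergence extend this to `L²`, where centering kills the second term. Hence
`E[a_i(X_k) a_j(X_l)]` is the `(l-k)`-th summand `r(l-k)` of `D(a)_{ij}`, which decays
geometrically; as `∑_{k,l<n} r(l-k) = ∑_{p<n} ∑_{|m|≤p} r(m)`, dividing by `n` gives `D(a)` by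
Cesàro. -/

open Finset Topology

theorem Finset.sum_Icc_neg_natCast {M : Type*} [AddCommMonoid M] (r : ℤ → M) (n : ℕ) :
    ∑ m ∈ Icc (-(n : ℤ)) n, r m = ∑ l ∈ range n, r (l - n) + ∑ k ∈ range (n + 1), r (n - k) := by
  have hneg : ∑ l ∈ range n, r (l - n) = ∑ m ∈ Ico (-(n : ℤ)) 0, r m := by
    rw [Int.Ico_eq_finset_map, sum_map]
    simp [add_comm, sub_eq_add_neg]
  have hnonneg : ∑ k ∈ range (n + 1), r (n - k) = ∑ m ∈ Icc (0 : ℤ) n, r m := by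
    rw [Int.Icc_eq_finset_map, sum_map, sub_zero, Int.toNat_natCast_add_one,
      ← sum_range_reflect]
    refine sum_congr rfl fun k hk => ?_
    simp only [Function.Embedding.trans_apply, Nat.castEmbedding_apply, addLeftEmbedding_apply,
      zero_add, add_tsub_cancel_right]
    rw [Nat.cast_sub (mem_range_succ_iff.1 hk), sub_sub_cancel]
  rw [hneg, hnonneg, ← sum_union (disjoint_left.2 fun m h1 h2 => by
    rw [mem_Ico] at h1; rw [mem_Icc] at h2; omega)]
  congr 1
  ext m
  simp only [mem_union, mem_Ico, mem_Icc]
  omega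

theorem Finset.sum_range_sum_range_sub {M : Type*} [AddCommMonoid M] (r : ℤ → M) (n : ℕ) :
    ∑ k ∈ range n, ∑ l ∈ range n, r (l - k) = ∑ p ∈ range n, ∑ m ∈ Icc (-(p : ℤ)) p, r m := by
  induction n with
  | zero => simp
  | succ n ih =>
    simp only [sum_range_succ _ n, sum_add_distrib, ih, sum_Icc_neg_natCast]
    abel

theorem tendsto_sum_range_sum_range_sub_div {r : ℤ → ℝ} (hr : Summable r) :
    Tendsto (fun n : ℕ => (∑ k ∈ range n, ∑ l ∈ range n, r (l - k)) / n) atTop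
      (𝓝 (∑' m, r m)) := by
  have hsymm := (hr.hasSum.comp tendsto_Icc_neg).cesaro
  refine hsymm.congr fun n => ?_
  simp [sum_range_sum_range_sub, div_eq_inv_mul]

theorem pastFiltration_le (Ω : Type*) [MeasurableSpace Ω] (n : ℤ) :
    pastFiltration Ω n ≤ MeasurableSpace.pi :=
  iSup₂_le fun i _ => (measurable_pi_apply i).comap_le

theorem measurable_eval_pastFiltration {Ω : Type*} [m : MeasurableSpace Ω] {i n : ℤ}
    (hi : i ≤ n) : Measurable[pastFiltration Ω n] (fun ωt : ℤ → Ω => ωt i) :=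
  Measurable.of_comap_le <| le_iSup₂_of_le (f := fun j (_ : j ≤ n) =>
    MeasurableSpace.comap (fun ωt : ℤ → Ω => ωt j) m) i hi le_rfl

theorem MeasureTheory.MeasurePreserving.of_leftInverse {α β : Type*} [MeasurableSpace α]
    [MeasurableSpace β] {μa : Measure α} {μb : Measure β} {f : α → β} {g : β → α}
    (hf : MeasurePreserving f μa μb) (hg : Measurable g) (hgf : Function.LeftInverse g f) :
    MeasurePreserving g μb μa := by
  refine ⟨hg, ?_⟩
  rw [← hf.map_eq, Measure.map_map hg hf.measurable, hgf.comp_eq_id, Measure.map_id]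

theorem MeasureTheory.MeasurePreserving.integral_comp_of_aestronglyMeasurable {α β : Type*}
    [MeasurableSpace α] [MeasurableSpace β] {μa : Measure α} {μb : Measure β} {f : α → β}
    (hf : MeasurePreserving f μa μb) {g : β → ℝ} (hg : AEStronglyMeasurable g μb) :
    ∫ x, g (f x) ∂μa = ∫ y, g y ∂μb := by
  rw [← hf.map_eq] at hg ⊢
  exact (integral_map hf.measurable.aemeasurable hg).symm

theorem measurePreserving_iterZ {Ω : Type*} [MeasurableSpace Ω] {ν : Measure Ω} {T Tinv : Ω → Ω}
    (hT : MeasurePreserving T ν ν) (hTinv : MeasurePreserving Tinv ν ν) :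
    ∀ m : ℤ, MeasurePreserving (iterZ T Tinv m) ν ν
  | Int.ofNat n => hT.iterate n
  | Int.negSucc n => hTinv.iterate (n + 1)

namespace ProbabilityTheory

theorem _root_.Measurable.truncation {α : Type*} [MeasurableSpace α] {f : α → ℝ}
    (hf : Measurable f) (A : ℝ) : Measurable (truncation f A) :=
  (measurable_id.indicator measurableSet_Ioc).comp hf

theorem tendsto_integral_truncation_mul {α : Type*} [MeasurableSpace α] {μ : Measure α}
    {f g : α → ℝ} (hf : AEStronglyMeasurable f μ) (hg : AEStronglyMeasurable g μ)
    (hfg : Integrable (fun x => f x * g x) μ) :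
    Tendsto (fun A => ∫ x, truncation f A x * truncation g A x ∂μ) atTop
      (𝓝 (∫ x, f x * g x ∂μ)) := by
  refine tendsto_integral_filter_of_dominated_convergence (fun x => |f x * g x|)
    (.of_forall fun A => hf.truncation.mul hg.truncation)
    (.of_forall fun A => .of_forall fun x => ?_) hfg.abs (.of_forall fun x => ?_)
  · rw [Real.norm_eq_abs, abs_mul, abs_mul]
    exact mul_le_mul (abs_truncation_le_abs_self _ _ _) (abs_truncation_le_abs_self _ _ _)
      (abs_nonneg _) (abs_nonneg _)
  · refine tendsto_const_nhds.congr' ?_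
    filter_upwards [Ioi_mem_atTop (max |f x| |g x|)] with A hA
    rw [truncation_eq_self (lt_of_le_of_lt (le_max_left _ _) hA),
      truncation_eq_self (lt_of_le_of_lt (le_max_right _ _) hA)]

end ProbabilityTheory

theorem abs_integral_mul_comp_le {Ω : Type*} [MeasurableSpace Ω] {ν : Measure Ω}
    {S : Ω → Ω} (hS : MeasurePreserving S ν ν) {u v : Ω → ℝ} (hu : MemLp u 2 ν)
    (hv : MemLp v 2 ν) :
    |∫ x, u x * v (S x) ∂ν| ≤ (∫ x, u x ^ 2 ∂ν + ∫ x, v x ^ 2 ∂ν) / 2 := by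
  have hvS : MemLp (fun x => v (S x)) 2 ν := hv.comp_measurePreserving hS
  calc |∫ x, u x * v (S x) ∂ν| ≤ ∫ x, |u x * v (S x)| ∂ν := abs_integral_le_integral_abs
    _ ≤ ∫ x, (u x ^ 2 + v (S x) ^ 2) / 2 ∂ν := by
        refine integral_mono (hu.integrable_mul hvS).abs
          ((hu.integrable_sq.add hvS.integrable_sq).div_const 2) fun x => ?_
        rw [abs_mul]
        nlinarith [sq_nonneg (|u x| - |v (S x)|), sq_abs (u x), sq_abs (v (S x))]
    _ = (∫ x, u x ^ 2 ∂ν + ∫ x, v x ^ 2 ∂ν) / 2 := by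
        rw [integral_div, integral_add hu.integrable_sq hvS.integrable_sq,
          hS.integral_comp_of_aestronglyMeasurable (g := fun x => v x ^ 2)
            (hv.aestronglyMeasurable.pow 2)]

noncomputable def chainCorrelation {Ω : Type*} [MeasurableSpace Ω] (ν : Measure Ω)
    (T Tinv : Ω → Ω) (α : ℝ) (u v : Ω → ℝ) (m : ℤ) : ℝ :=
  (1 - α) ^ m.natAbs * ∫ x, u x * v (iterZ T Tinv m x) ∂ν

theorem Dmat_apply {Ω : Type*} [MeasurableSpace Ω] (ν : Measure Ω) (T Tinv : Ω → Ω) (α : ℝ)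
    {d : ℕ} (a : Ω → Fin d → ℝ) (i j : Fin d) :
    Dmat ν T Tinv α a i j = ∑' m, chainCorrelation ν T Tinv α (a · i) (a · j) m :=
  rfl

theorem summable_chainCorrelation {Ω : Type*} [MeasurableSpace Ω] {ν : Measure Ω}
    {T Tinv : Ω → Ω} (hiter : ∀ m, MeasurePreserving (iterZ T Tinv m) ν ν) {α : ℝ}
    (hα0 : 0 < α) (hα1 : α < 1) {u v : Ω → ℝ} (hu : MemLp u 2 ν) (hv : MemLp v 2 ν) :
    Summable (chainCorrelation ν T Tinv α u v) := by
  have hgeom : Summable fun m : ℤ => (1 - α) ^ m.natAbs :=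
    .of_nat_of_neg (by simpa using summable_geometric_of_lt_one (by linarith) (by linarith))
      (by simpa using summable_geometric_of_lt_one (by linarith) (by linarith))
  refine .of_norm_bounded (hgeom.mul_right ((∫ x, u x ^ 2 ∂ν + ∫ x, v x ^ 2 ∂ν) / 2)) fun m => ?_
  rw [chainCorrelation, norm_mul, norm_pow, Real.norm_of_nonneg (by linarith : 0 ≤ 1 - α)]
  exact mul_le_mul_of_nonneg_left (abs_integral_mul_comp_le (hiter m) hu hv) (by positivity)

namespace KnudsenChain

variable {Ω : Type*} [MeasurableSpace Ω] {ν : Measure Ω} {T : Ω → Ω} {α : ℝ}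
  {ν' : Measure (ℤ → Ω)}

theorem measurePreserving_eval (hchain : KnudsenChain ν T α ν') (n : ℤ) :
    MeasurePreserving (fun ωt : ℤ → Ω => ωt n) ν' ν :=
  ⟨measurable_pi_apply n, hchain.1 n⟩

variable [IsProbabilityMeasure ν']

theorem integral_mul_eval_succ (hchain : KnudsenChain ν T α ν') (hT : Measurable T)
    {f g : Ω → ℝ} (hf : Measurable f) (hg : Measurable g) {Cf Cg : ℝ}
    (hfb : ∀ x, |f x| ≤ Cf) (hgb : ∀ x, |g x| ≤ Cg) {m n : ℤ} (hmn : m ≤ n) :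
    ∫ ωt, f (ωt m) * g (ωt (n + 1)) ∂ν'
      = (1 - α) * ∫ ωt, f (ωt m) * g (T (ωt n)) ∂ν'
        + α * (∫ x, f x ∂ν) * ∫ x, g x ∂ν := by
  set F : (ℤ → Ω) → ℝ := fun ωt => f (ωt m)
  set G : (ℤ → Ω) → ℝ := fun ωt => g (ωt (n + 1))
  have hF_bdd : ∀ᵐ ωt ∂ν', ‖F ωt‖ ≤ Cf := .of_forall fun ωt => hfb _
  have hF : Integrable F ν' :=
    .of_bound (hf.comp (measurable_pi_apply m)).aestronglyMeasurable Cf hF_bdd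
  have hG : Integrable G ν' :=
    .of_bound (hg.comp (measurable_pi_apply (n + 1))).aestronglyMeasurable Cg
      (.of_forall fun ωt => hgb _)
  have hFgT : Integrable (fun ωt => F ωt * g (T (ωt n))) ν' :=
    (Integrable.of_bound ((hg.comp hT).comp (measurable_pi_apply n)).aestronglyMeasurable Cg
      (.of_forall fun ωt => hgb _)).bdd_mul hF.aestronglyMeasurable hF_bdd
  have hF_past : StronglyMeasurable[pastFiltration Ω n] F :=
    (hf.comp (measurable_eval_pastFiltration hmn)).stronglyMeasurable
  calc ∫ ωt, F ωt * G ωt ∂ν'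
      = ∫ ωt, (ν'[F * G | pastFiltration Ω n]) ωt ∂ν' :=
        (integral_condExp (pastFiltration_le Ω n)).symm
    _ = ∫ ωt, F ωt * (ν'[G | pastFiltration Ω n]) ωt ∂ν' :=
        integral_congr_ae (condExp_mul_of_stronglyMeasurable_left hF_past
          (hG.bdd_mul hF.aestronglyMeasurable hF_bdd) hG)
    _ = ∫ ωt, F ωt * ((1 - α) * g (T (ωt n)) + α * ∫ x, g x ∂ν) ∂ν' :=
        integral_congr_ae <| (hchain.2 n g hg ⟨Cg, hgb⟩).mono fun ωt h => congrArg (F ωt * ·) h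
    _ = ∫ ωt, ((1 - α) * (F ωt * g (T (ωt n))) + (α * ∫ x, g x ∂ν) * F ωt) ∂ν' := by
        congr 1; ext; ring
    _ = (1 - α) * ∫ ωt, F ωt * g (T (ωt n)) ∂ν' + (α * ∫ x, g x ∂ν) * ∫ ωt, F ωt ∂ν' := by
        rw [integral_add (hFgT.const_mul _) (hF.const_mul _), integral_const_mul,
          integral_const_mul]
    _ = _ := by
        rw [(hchain.measurePreserving_eval m).integral_comp_of_aestronglyMeasurable
          hf.aestronglyMeasurable]
        ring

theorem integral_mul_eval_add_of_bounded (hchain : KnudsenChain ν T α ν')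
    (hT : MeasurePreserving T ν ν) {f g : Ω → ℝ} (hf : Measurable f) (hg : Measurable g)
    {Cf Cg : ℝ} (hfb : ∀ x, |f x| ≤ Cf) (hgb : ∀ x, |g x| ≤ Cg) (m : ℤ) (k : ℕ) :
    ∫ ωt, f (ωt m) * g (ωt (m + k)) ∂ν'
      = (1 - α) ^ k * ∫ x, f x * g (T^[k] x) ∂ν
        + (1 - (1 - α) ^ k) * (∫ x, f x ∂ν) * ∫ x, g x ∂ν := by
  induction k generalizing g with
  | zero =>
    simpa using (hchain.measurePreserving_eval m).integral_comp_of_aestronglyMeasurable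
      (hf.mul hg).aestronglyMeasurable
  | succ k ih =>
    have hstep := hchain.integral_mul_eval_succ hT.measurable hf hg hfb hgb
      (m.le_add_of_nonneg_right k.cast_nonneg)
    rw [show m + ((k + 1 : ℕ) : ℤ) = m + k + 1 by push_cast; ring, hstep,
      ih (g := fun x => g (T x)) (hg.comp hT.measurable) fun x => hgb (T x),
      hT.integral_comp_of_aestronglyMeasurable hg.aestronglyMeasurable]
    simp only [Function.iterate_succ_apply']
    ring

variable [IsProbabilityMeasure ν]

theorem integral_mul_eval_add (hchain : KnudsenChain ν T α ν') (hT : MeasurePreserving T ν ν)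
    {u v : Ω → ℝ} (hu : Measurable u) (hv : Measurable v) (hu2 : MemLp u 2 ν)
    (hv2 : MemLp v 2 ν) (m : ℤ) (k : ℕ) :
    ∫ ωt, u (ωt m) * v (ωt (m + k)) ∂ν'
      = (1 - α) ^ k * ∫ x, u x * v (T^[k] x) ∂ν
        + (1 - (1 - α) ^ k) * (∫ x, u x ∂ν) * ∫ x, v x ∂ν := by
  have hvk : MemLp (fun x => v (T^[k] x)) 2 ν := hv2.comp_measurePreserving (hT.iterate k)
  have hum : MemLp (fun ωt : ℤ → Ω => u (ωt m)) 2 ν' :=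
    hu2.comp_measurePreserving (hchain.measurePreserving_eval m)
  have hvmk : MemLp (fun ωt : ℤ → Ω => v (ωt (m + k))) 2 ν' :=
    hv2.comp_measurePreserving (hchain.measurePreserving_eval (m + k))
  have hchain_lim := tendsto_integral_truncation_mul hum.aestronglyMeasurable
    hvmk.aestronglyMeasurable (hum.integrable_mul hvmk)
  have hbase_lim := ((tendsto_integral_truncation_mul hu2.aestronglyMeasurable
      hvk.aestronglyMeasurable (hu2.integrable_mul hvk)).const_mul ((1 - α) ^ k)).add
    (((tendsto_integral_truncation (hu2.integrable one_le_two)).const_mul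
      (1 - (1 - α) ^ k)).mul (tendsto_integral_truncation (hv2.integrable one_le_two)))
  refine tendsto_nhds_unique hchain_lim (hbase_lim.congr fun A => ?_)
  exact (hchain.integral_mul_eval_add_of_bounded hT (hu.truncation A) (hv.truncation A)
    (abs_truncation_le_bound u A) (abs_truncation_le_bound v A) m k).symm

theorem integral_mul_eval_add_of_integral_eq_zero (hchain : KnudsenChain ν T α ν')
    (hT : MeasurePreserving T ν ν) {u v : Ω → ℝ} (hu : Measurable u) (hv : Measurable v)
    (hu2 : MemLp u 2 ν) (hv2 : MemLp v 2 ν) (hv0 : ∫ x, v x ∂ν = 0) (m : ℤ) (k : ℕ) :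
    ∫ ωt, u (ωt m) * v (ωt (m + k)) ∂ν' = (1 - α) ^ k * ∫ x, u x * v (T^[k] x) ∂ν := by
  simp [hchain.integral_mul_eval_add hT hu hv hu2 hv2, hv0]

theorem integral_mul_eval_eq_chainCorrelation (hchain : KnudsenChain ν T α ν')
    (hT : MeasurePreserving T ν ν) {Tinv : Ω → Ω} (hTinv : Measurable Tinv)
    (hinv : Function.LeftInverse Tinv T) {u v : Ω → ℝ} (hu : Measurable u) (hv : Measurable v)
    (hu2 : MemLp u 2 ν) (hv2 : MemLp v 2 ν) (hu0 : ∫ x, u x ∂ν = 0) (hv0 : ∫ x, v x ∂ν = 0)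
    (m n : ℤ) :
    ∫ ωt, u (ωt m) * v (ωt n) ∂ν' = chainCorrelation ν T Tinv α u v (n - m) := by
  rcases hnm : n - m with k | k
  · obtain rfl : n = m + k := by rw [Int.ofNat_eq_natCast] at hnm; omega
    exact hchain.integral_mul_eval_add_of_integral_eq_zero hT hu hv hu2 hv2 hv0 m k
  · obtain rfl : m = n + (k + 1 : ℕ) := by omega
    have hswap := hchain.integral_mul_eval_add_of_integral_eq_zero hT hv hu hv2 hu2 hu0 n (k + 1)
    -- change of variables `y = T^[k+1] x`, undone by `Tinv^[k+1]`
    have hsubst := (hT.iterate (k + 1)).integral_comp_of_aestronglyMeasurable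
      (g := fun y => u y * v (Tinv^[k + 1] y))
      (hu.mul (hv.comp (hTinv.iterate _))).aestronglyMeasurable
    simp only [hinv.iterate (k + 1) _] at hsubst
    simp only [chainCorrelation, Int.natAbs_negSucc, iterZ]
    rw [← hsubst]
    simpa only [mul_comm] using hswap

theorem integral_sum_mul_sum_eq (hchain : KnudsenChain ν T α ν')
    (hT : MeasurePreserving T ν ν) {Tinv : Ω → Ω} (hTinv : Measurable Tinv)
    (hinv : Function.LeftInverse Tinv T) {u v : Ω → ℝ} (hu : Measurable u) (hv : Measurable v)
    (hu2 : MemLp u 2 ν) (hv2 : MemLp v 2 ν) (hu0 : ∫ x, u x ∂ν = 0) (hv0 : ∫ x, v x ∂ν = 0)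
    (n : ℕ) :
    ∫ ωt, (∑ k ∈ range n, u (ωt k)) * (∑ k ∈ range n, v (ωt k)) ∂ν'
      = ∑ k ∈ range n, ∑ l ∈ range n, chainCorrelation ν T Tinv α u v (l - k) := by
  have hint (k l : ℕ) : Integrable (fun ωt : ℤ → Ω => u (ωt k) * v (ωt l)) ν' :=
    (hu2.comp_measurePreserving (hchain.measurePreserving_eval k)).integrable_mul
      (hv2.comp_measurePreserving (hchain.measurePreserving_eval l))
  simp_rw [sum_mul_sum]
  rw [integral_finsetSum _ fun k _ => integrable_finsetSum _ fun l _ => hint k l]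
  refine sum_congr rfl fun k _ => ?_
  rw [integral_finsetSum _ fun l _ => hint k l]
  exact sum_congr rfl fun l _ =>
    hchain.integral_mul_eval_eq_chainCorrelation hT hTinv hinv hu hv hu2 hv2 hu0 hv0 k l

end KnudsenChain

theorem stmt7_general {Ω : Type*} [MeasurableSpace Ω] (ν : Measure Ω) [IsProbabilityMeasure ν]
    (T Tinv : Ω → Ω) (hT : MeasurePreserving T ν ν) (hTinv : Measurable Tinv)
    (hinv1 : Function.LeftInverse Tinv T)
    (α : ℝ) (hα0 : 0 < α) (hα1 : α < 1)
    (ν' : Measure (ℤ → Ω)) [IsProbabilityMeasure ν'] (hchain : KnudsenChain ν T α ν')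
    (d : ℕ) (a : Ω → Fin d → ℝ) (hameas : Measurable a)
    (hacent : ∫ ω, a ω ∂ν = 0) (ha2 : MemLp a 2 ν) :
    (∀ k : ℕ, ∀ i j : Fin d,
      ∫ ωt, a (ωt 0) i * a (ωt (k : ℤ)) j ∂ν'
        = (1 - α) ^ k * ∫ ω, a ω i * a (T^[k] ω) j ∂ν) ∧
    (∀ i j : Fin d,
      Tendsto (fun n : ℕ =>
          (∫ ωt, (∑ k ∈ Finset.range n, a (ωt (k : ℤ)) i)
              * (∑ k ∈ Finset.range n, a (ωt (k : ℤ)) j) ∂ν') / n)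
        atTop (nhds (Dmat ν T Tinv α a i j))) := by
  have hmeas (i : Fin d) : Measurable (a · i) := (measurable_pi_apply i).comp hameas
  have hcent (i : Fin d) : ∫ x, a x i ∂ν = 0 := by
    rw [← eval_integral (fun i => (ha2.eval i).integrable one_le_two), hacent, Pi.zero_apply]
  refine ⟨fun k i j => ?_, fun i j => ?_⟩
  · simpa using hchain.integral_mul_eval_add_of_integral_eq_zero hT (hmeas i) (hmeas j)
      (ha2.eval i) (ha2.eval j) (hcent j) 0 k
  · have hiter := measurePreserving_iterZ hT (hT.of_leftInverse hTinv hinv1)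
    rw [Dmat_apply]
    refine (tendsto_sum_range_sum_range_sub_div
      (summable_chainCorrelation hiter hα0 hα1 (ha2.eval i) (ha2.eval j))).congr fun n => ?_
    rw [hchain.integral_sum_mul_sum_eq hT hTinv hinv1 (hmeas i) (hmeas j) (ha2.eval i)
      (ha2.eval j) (hcent i) (hcent j)]

/-- `E_ν'[a(X_0) ⊗ a(X_k)] = (1-α)^k E_ν[a ⊗ (a∘T^k)]` for `k ≥ 0`,
and `(1/n)·E_ν'[(∑_{k<n} a(X_k))^{⊗2}] → D(a) = ∑_{k∈ℤ} (1-α)^{|k|} E_ν[a ⊗ (a∘T^k)]`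
entrywise. -/
theorem stmt7 {Ω : Type*} [MeasurableSpace Ω] (ν : Measure Ω) [IsProbabilityMeasure ν]
    (T Tinv : Ω → Ω) (hT : MeasurePreserving T ν ν) (hTinv : Measurable Tinv)
    (hinv1 : Function.LeftInverse Tinv T) (hinv2 : Function.RightInverse Tinv T)
    (α : ℝ) (hα0 : 0 < α) (hα1 : α < 1)
    (ν' : Measure (ℤ → Ω)) [IsProbabilityMeasure ν'] (hchain : KnudsenChain ν T α ν')
    (d : ℕ) (hd : 1 ≤ d) (a : Ω → Fin d → ℝ) (hameas : Measurable a)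
    (hacent : ∫ ω, a ω ∂ν = 0) (ha2 : MemLp a 2 ν) :
    (∀ k : ℕ, ∀ i j : Fin d,
      ∫ ωt, a (ωt 0) i * a (ωt (k : ℤ)) j ∂ν'
        = (1 - α) ^ k * ∫ ω, a ω i * a (T^[k] ω) j ∂ν) ∧
    (∀ i j : Fin d,
      Tendsto (fun n : ℕ =>
          (∫ ωt, (∑ k ∈ Finset.range n, a (ωt (k : ℤ)) i)
              * (∑ k ∈ Finset.range n, a (ωt (k : ℤ)) j) ∂ν') / n)
        atTop (nhds (Dmat ν T Tinv α a i j))) :=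
  stmt7_general ν T Tinv hT hTinv hinv1 α hα0 hα1 ν' hchain d a hameas hacent ha2
end

section
/- Let f ∈ L²(Ω, ν) be real-valued with ∫ f dν = 0, and suppose that ∫ f² dν + 2·∑_{k≥1} (1−α)^k·∫ f·(f∘T^k) dν = 0 (the series converges absolutely since |∫ f·(f∘T^k) dν| ≤ ∫ f² dν for every k). Then f = 0 ν-almost everywhere. -/
open MeasureTheory Filter

open scoped RealInnerProductSpace

/-!
With `U` the Koopman isometry `g ↦ g ∘ T` of `L²(ν)`, `r = 1 - α` and `F = f` in `L²`, the
hypothesis reads `‖F‖² + 2 ∑_{k ≥ 1} r^k ⟪F, U^k F⟫ = 0`. The vector `h = ∑_{k ≥ 0} r^k U^k F`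
satisfies `h = F + r U h`, and expanding `‖h‖²` turns the hypothesis into
`‖h‖² = r² ‖U h‖² = r² ‖h‖²`. Since `r² < 1`, `h = 0`, hence `F = h - r U h = 0`.
-/

namespace LinearIsometry

variable {E : Type*} [NormedAddCommGroup E] [InnerProductSpace ℝ E] (U : E →ₗᵢ[ℝ] E)

theorem norm_iterate (k : ℕ) (x : E) : ‖U^[k] x‖ = ‖x‖ := by
  induction k generalizing x with
  | zero => rfl
  | succ k ih => rw [Function.iterate_succ_apply, ih, U.norm_map]

variable [CompleteSpace E] {r : ℝ}

theorem summable_pow_smul_iterate (hr : |r| < 1) (x : E) :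
    Summable fun k : ℕ => r ^ k • U^[k] x := by
  refine Summable.of_norm ?_
  simp_rw [norm_smul, U.norm_iterate, norm_pow, Real.norm_eq_abs]
  exact (summable_geometric_of_lt_one (abs_nonneg r) hr).mul_right _

theorem map_tsum_pow_smul_iterate (hr : |r| < 1) (x : E) :
    U (∑' k : ℕ, r ^ k • U^[k] x) = ∑' k : ℕ, r ^ k • U^[k + 1] x := by
  refine (U.toContinuousLinearMap.map_tsum (U.summable_pow_smul_iterate hr x)).trans ?_
  simp [Function.iterate_succ_apply']

theorem tsum_pow_smul_iterate_eq (hr : |r| < 1) (x : E) :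
    ∑' k : ℕ, r ^ k • U^[k] x = x + r • U (∑' k : ℕ, r ^ k • U^[k] x) := by
  rw [U.map_tsum_pow_smul_iterate hr, ← tsum_const_smul'' r,
    (U.summable_pow_smul_iterate hr x).tsum_eq_zero_add]
  simp [pow_succ', mul_smul]

theorem mul_inner_map_tsum_pow_smul_iterate (hr : |r| < 1) (x : E) :
    r * ⟪x, U (∑' k : ℕ, r ^ k • U^[k] x)⟫ = ∑' k : ℕ, r ^ (k + 1) * ⟪x, U^[k + 1] x⟫ := by
  have hs : Summable fun k : ℕ => r ^ k • U^[k + 1] x := by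
    simpa [Function.iterate_succ_apply'] using
      U.toContinuousLinearMap.summable (U.summable_pow_smul_iterate hr x)
  rw [U.map_tsum_pow_smul_iterate hr, ← innerSL_apply_apply ℝ, (innerSL ℝ x).map_tsum hs,
    ← tsum_mul_left]
  simp [pow_succ', mul_assoc]

theorem eq_zero_of_norm_sq_add_two_tsum_inner_iterate_eq_zero (hr : |r| < 1) (x : E)
    (hx : ‖x‖ ^ 2 + 2 * ∑' k : ℕ, r ^ (k + 1) * ⟪x, U^[k + 1] x⟫ = 0) : x = 0 := by
  set h := ∑' k : ℕ, r ^ k • U^[k] x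
  have hrec : h = x + r • U h := U.tsum_pow_smul_iterate_eq hr x
  have hnorm : ‖h‖ ^ 2 = r ^ 2 * ‖h‖ ^ 2 := by
    calc ‖h‖ ^ 2 = ‖x‖ ^ 2 + 2 * (r * ⟪x, U h⟫) + r ^ 2 * ‖h‖ ^ 2 := by
          conv_lhs => rw [hrec]
          rw [norm_add_sq_real, real_inner_smul_right, norm_smul, U.norm_map, mul_pow,
            Real.norm_eq_abs, sq_abs]
      _ = r ^ 2 * ‖h‖ ^ 2 := by
          rw [U.mul_inner_map_tsum_pow_smul_iterate hr x, hx, zero_add]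
  have hr2 : r ^ 2 < 1 := by nlinarith [abs_nonneg r, sq_abs r]
  have hh : h = 0 := by
    have hsq : (1 - r ^ 2) * ‖h‖ ^ 2 = 0 := by linarith
    simpa using (mul_eq_zero.mp hsq).resolve_left (by linarith)
  simpa [hh] using hrec.symm

end LinearIsometry

theorem MeasureTheory.MemLp.inner_toLp_toLp {Ω : Type*} [MeasurableSpace Ω] {ν : Measure Ω}
    {f g : Ω → ℝ} (hf : MemLp f 2 ν) (hg : MemLp g 2 ν) :
    ⟪hf.toLp f, hg.toLp g⟫ = ∫ ω, f ω * g ω ∂ν := by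
  rw [L2.inner_def]
  refine integral_congr_ae ?_
  filter_upwards [hf.coeFn_toLp, hg.coeFn_toLp] with ω hfω hgω
  rw [hfω, hgω, real_inner_eq_re_inner, RCLike.inner_apply]
  simp [mul_comm]

theorem MeasureTheory.MemLp.inner_toLp_compMeasurePreserving_iterate {Ω : Type*}
    [MeasurableSpace Ω] {ν : Measure Ω} {T : Ω → Ω} (hT : MeasurePreserving T ν ν)
    {f : Ω → ℝ} (hf : MemLp f 2 ν) (k : ℕ) :
    ⟪hf.toLp f, (Lp.compMeasurePreservingₗᵢ ℝ T hT)^[k] (hf.toLp f)⟫ =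
      ∫ ω, f ω * f (T^[k] ω) ∂ν := by
  have hU : (Lp.compMeasurePreservingₗᵢ ℝ T hT)^[k] (hf.toLp f) =
      (hf.comp_measurePreserving (hT.iterate k)).toLp (f ∘ T^[k]) := by
    change (Lp.compMeasurePreserving T hT)^[k] _ = _
    rw [Lp.compMeasurePreserving_iterate]
    rfl
  rw [hU, hf.inner_toLp_toLp]
  rfl

theorem stmt9_general {Ω : Type*} [MeasurableSpace Ω] (ν : Measure Ω)
    (T : Ω → Ω) (hT : MeasurePreserving T ν ν)
    (α : ℝ) (hα0 : 0 < α) (hα1 : α < 1)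
    (f : Ω → ℝ) (hf : MemLp f 2 ν)
    (hzero : (∫ ω, (f ω) ^ 2 ∂ν)
        + 2 * ∑' k : ℕ, (1 - α) ^ (k + 1) * ∫ ω, f ω * f (T^[k + 1] ω) ∂ν = 0) :
    f =ᵐ[ν] 0 := by
  have hr : |1 - α| < 1 := abs_sub_lt_iff.mpr ⟨by linarith, by linarith⟩
  have hnorm : ‖hf.toLp f‖ ^ 2 = ∫ ω, (f ω) ^ 2 ∂ν := by
    simpa [sq] using (real_inner_self_eq_norm_sq (hf.toLp f)).symm.trans (hf.inner_toLp_toLp hf)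
  have hF : hf.toLp f = 0 := by
    refine LinearIsometry.eq_zero_of_norm_sq_add_two_tsum_inner_iterate_eq_zero
      (Lp.compMeasurePreservingₗᵢ ℝ T hT) hr _ ?_
    simpa only [hnorm, hf.inner_toLp_compMeasurePreserving_iterate hT] using hzero
  filter_upwards [hf.coeFn_toLp, Lp.coeFn_zero ℝ 2 ν] with ω hfω h0
  rw [← hfω, hF, h0]

/-- If `f ∈ L²(ν)` is centered and
`∫ f² dν + 2 ∑_{k ≥ 1} (1-α)^k ∫ f · (f ∘ T^k) dν = 0`, then `f = 0` ν-a.e. -/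
theorem stmt9 {Ω : Type*} [MeasurableSpace Ω] (ν : Measure Ω) [IsProbabilityMeasure ν]
    (T : Ω → Ω) (hT : MeasurePreserving T ν ν)
    (α : ℝ) (hα0 : 0 < α) (hα1 : α < 1)
    (f : Ω → ℝ) (hf : MemLp f 2 ν) (hcent : ∫ ω, f ω ∂ν = 0)
    (hzero : (∫ ω, (f ω) ^ 2 ∂ν)
        + 2 * ∑' k : ℕ, (1 - α) ^ (k + 1) * ∫ ω, f ω * f (T^[k + 1] ω) ∂ν = 0) :
    f =ᵐ[ν] 0 :=
  stmt9_general ν T hT α hα0 hα1 f hf hzero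
end
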